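/- arXiv:2602.05267 — 2 statements merged into one kernel-verified Lean document; each statement's English description precedes it below -/
import Mathlib

section
/- Let G be a finite simple graph equipped with a type-2A crossing structure, let S be a set of vertices of G, and let F and F' be two distinct connected components of G − S. If a and b are vertices of F with ab an edge of G, and c and d are vertices of F' with cd an edge of G, then the edges ab and cd do not cross. -/
/-- The associated edges of a crossing pair `ab`, `cd`: those of the vertex pairs
`ac`, `ad`, `bc`, `bd` that are edges of `G`. -/
def AssocEdges {V : Type*} (G : SimpleGraph V) (a b c d : V) : Set (Sym2 V) :=
  {e | e ∈ ({s(a, c), s(a, d), s(b, c), s(b, d)} : Set (Sym2 V)) ∧ e ∈ G.edgeSet}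

/-- A crossing structure on a simple graph `G`: a symmetric irreflexive relation on
unordered pairs of vertices that relates only edges of `G`, and whenever it relates
two edges, these edges have four pairwise distinct endpoints. -/
structure IsCrossingStructure {V : Type*} (G : SimpleGraph V)
    (Cross : Sym2 V → Sym2 V → Prop) : Prop where
  symm : ∀ e f, Cross e f → Cross f e
  irrefl : ∀ e, ¬ Cross e e
  edge_mem : ∀ e f, Cross e f → e ∈ G.edgeSet ∧ f ∈ G.edgeSet
  distinct : ∀ a b c d, Cross s(a, b) s(c, d) →
    a ≠ b ∧ a ≠ c ∧ a ≠ d ∧ b ≠ c ∧ b ≠ d ∧ c ≠ d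

/-- A crossing structure is type-2A if every crossing pair has at least two associated
edges, and whenever a crossing pair has exactly two associated edges, these two edges
share no endpoint (i.e. they are the pair `ac, bd` or the pair `ad, bc`). -/
def IsType2A {V : Type*} (G : SimpleGraph V) (Cross : Sym2 V → Sym2 V → Prop) : Prop :=
  ∀ a b c d, Cross s(a, b) s(c, d) →
    2 ≤ (AssocEdges G a b c d).ncard ∧
      ((AssocEdges G a b c d).ncard = 2 →
        (G.Adj a c ∧ G.Adj b d) ∨ (G.Adj a d ∧ G.Adj b c))

/-- A crossing structure is 1-planar if every edge crosses at most one other edge. -/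
def IsOnePlanar {V : Type*} (Cross : Sym2 V → Sym2 V → Prop) : Prop :=
  ∀ e f g, Cross e f → Cross e g → f = g

/-- A crossing structure is nice if no associated edge of a crossing pair crosses any edge. -/
def IsNice {V : Type*} (G : SimpleGraph V) (Cross : Sym2 V → Sym2 V → Prop) : Prop :=
  ∀ a b c d, Cross s(a, b) s(c, d) →
    ∀ e ∈ AssocEdges G a b c d, ∀ f, ¬ Cross e f

/-- An edge is crossed if it crosses some edge. -/
def IsCrossed {V : Type*} (Cross : Sym2 V → Sym2 V → Prop) (e : Sym2 V) : Prop :=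
  ∃ f, Cross e f

theorem SimpleGraph.ConnectedComponent.eq_of_adj_of_mem_supp {W : Type*} {H : SimpleGraph W}
    {C C' : H.ConnectedComponent} {x y : W} (hx : x ∈ C.supp) (hy : y ∈ C'.supp)
    (hxy : H.Adj x y) : C = C' := by
  rw [← hx, ← hy]
  exact SimpleGraph.ConnectedComponent.connectedComponentMk_eq_of_adj hxy

theorem IsType2A.adj_of_cross {V : Type*} {G : SimpleGraph V} {Cross : Sym2 V → Sym2 V → Prop}
    (h2A : IsType2A G Cross) {a b c d : V} (hcr : Cross s(a, b) s(c, d)) :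
    G.Adj a c ∨ G.Adj a d ∨ G.Adj b c ∨ G.Adj b d := by
  obtain ⟨e, he, he_edge⟩ : (AssocEdges G a b c d).Nonempty :=
    Set.nonempty_of_ncard_ne_zero (by have := (h2A a b c d hcr).1; omega)
  rcases he with rfl | rfl | rfl | rfl <;> rw [SimpleGraph.mem_edgeSet] at he_edge <;> tauto

theorem statement2_general {V : Type*} (G : SimpleGraph V)
    (Cross : Sym2 V → Sym2 V → Prop)
    (h2A : IsType2A G Cross)
    (S : Set V)
    (F F' : (G.induce (Sᶜ : Set V)).ConnectedComponent) (hFF' : F ≠ F')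
    (a b : (Sᶜ : Set V)) (ha : a ∈ F.supp) (hb : b ∈ F.supp)
    (c d : (Sᶜ : Set V)) (hc : c ∈ F'.supp) (hd : d ∈ F'.supp) :
    ¬ Cross s((a : V), (b : V)) s((c : V), (d : V)) := by
  intro hcr
  have no_adj : ∀ x ∈ F.supp, ∀ y ∈ F'.supp, ¬ G.Adj (x : V) (y : V) := fun x hx y hy hxy =>
    hFF' (SimpleGraph.ConnectedComponent.eq_of_adj_of_mem_supp hx hy hxy)
  rcases h2A.adj_of_cross hcr with h | h | h | h
  · exact no_adj a ha c hc h
  · exact no_adj a ha d hd h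
  · exact no_adj b hb c hc h
  · exact no_adj b hb d hd h

/-- for a vertex set `S` and distinct components `F`, `F'` of `G − S`,
an edge of `G` inside `F` never crosses an edge of `G` inside `F'`. -/
theorem statement2 {V : Type*} [Fintype V] (G : SimpleGraph V)
    (Cross : Sym2 V → Sym2 V → Prop)
    (hC : IsCrossingStructure G Cross) (h2A : IsType2A G Cross)
    (S : Set V)
    (F F' : (G.induce (Sᶜ : Set V)).ConnectedComponent) (hFF' : F ≠ F')
    (a b : (Sᶜ : Set V)) (ha : a ∈ F.supp) (hb : b ∈ F.supp)
    (hab : G.Adj (a : V) (b : V))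
    (c d : (Sᶜ : Set V)) (hc : c ∈ F'.supp) (hd : d ∈ F'.supp)
    (hcd : G.Adj (c : V) (d : V)) :
    ¬ Cross s((a : V), (b : V)) s((c : V), (d : V)) :=
  statement2_general G Cross h2A S F F' hFF' a b ha hb c d hc hd
end

section
/- Let G be a finite simple graph equipped with a type-2A, 1-planar and nice crossing structure, and let X and Y be two disjoint sets of vertices of G. Let G' be the graph obtained from G by deleting every edge xy with x ∈ X and y ∈ Y that crosses some edge both of whose endpoints lie in X. Then every vertex of Y that has a neighbour in X in the graph G also has a neighbour in X in the graph G'. -/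
section Crossing

variable {V : Type*} {G : SimpleGraph V} {Cross : Sym2 V → Sym2 V → Prop} {a b c d : V}

theorem assocEdges_subset_of_not_adj (hbc : ¬G.Adj b c) (hbd : ¬G.Adj b d) :
    AssocEdges G a b c d ⊆ {s(a, c), s(a, d)} := by
  rintro e ⟨he, hedge⟩
  rcases he with rfl | rfl | rfl | rfl
  · exact .inl rfl
  · exact .inr rfl
  · exact absurd hedge hbc
  · exact absurd hedge hbd

theorem ncard_assocEdges_le_two_of_not_adj (hbc : ¬G.Adj b c) (hbd : ¬G.Adj b d) :
    (AssocEdges G a b c d).ncard ≤ 2 :=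
  calc (AssocEdges G a b c d).ncard ≤ ({s(a, c), s(a, d)} : Set (Sym2 V)).ncard :=
        Set.ncard_le_ncard (assocEdges_subset_of_not_adj hbc hbd) (Set.toFinite _)
    _ ≤ 2 := (Set.ncard_insert_le _ _).trans (by simp)

theorem IsType2A.adj_or_adj (h2A : IsType2A G Cross) (hcr : Cross s(a, b) s(c, d)) :
    G.Adj b c ∨ G.Adj b d := by
  by_contra! ⟨hbc, hbd⟩
  obtain ⟨hge, htwo⟩ := h2A a b c d hcr
  rcases htwo (le_antisymm (ncard_assocEdges_le_two_of_not_adj hbc hbd) hge) with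
    ⟨-, hbd'⟩ | ⟨-, hbc'⟩
  · exact hbd hbd'
  · exact hbc hbc'

theorem IsType2A.exists_adj (h2A : IsType2A G Cross) (hcr : Cross s(a, b) s(c, d)) :
    ∃ e ∈ ({c, d} : Set V), G.Adj b e := by
  rcases h2A.adj_or_adj hcr with h | h
  exacts [⟨c, .inl rfl, h⟩, ⟨d, .inr rfl, h⟩]

theorem IsNice.not_isCrossed_of_adj (hnice : IsNice G Cross) (hcr : Cross s(a, b) s(c, d))
    {e : V} (he : e ∈ ({c, d} : Set V)) (hbe : G.Adj b e) : ¬IsCrossed Cross s(b, e) := by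
  rintro ⟨f, hf⟩
  refine hnice a b c d hcr _ ⟨?_, hbe⟩ f hf
  rcases he with rfl | rfl
  exacts [.inr (.inr (.inl rfl)), .inr (.inr (.inr rfl))]

end Crossing

theorem statement7_general {V : Type*} (G : SimpleGraph V)
    (Cross : Sym2 V → Sym2 V → Prop)
    (h2A : IsType2A G Cross)
    (hnice : IsNice G Cross)
    (X Y : Set V)
    (G' : SimpleGraph V)
    (hG' : G' = G.deleteEdges
      {e : Sym2 V | ∃ x ∈ X, ∃ y ∈ Y, e = s(x, y) ∧ ∃ a ∈ X, ∃ b ∈ X, Cross e s(a, b)}) :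
    ∀ y ∈ Y, (∃ x ∈ X, G.Adj x y) → ∃ x ∈ X, G'.Adj x y := by
  subst hG'
  rintro y - ⟨x, hx, hxy⟩
  by_cases hdel : ∃ a ∈ X, ∃ b ∈ X, Cross s(x, y) s(a, b)
  · obtain ⟨a, ha, b, hb, hcr⟩ := hdel
    obtain ⟨c, hcab, hyc⟩ := h2A.exists_adj hcr
    have hcX : c ∈ X := by rcases hcab with rfl | rfl <;> assumption
    refine ⟨c, hcX, SimpleGraph.deleteEdges_adj.2 ⟨hyc.symm, ?_⟩⟩
    rintro ⟨_, -, _, -, -, _, -, _, -, hcr'⟩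
    rw [Sym2.eq_swap] at hcr'
    exact hnice.not_isCrossed_of_adj hcr hcab hyc ⟨_, hcr'⟩
  · refine ⟨x, hx, SimpleGraph.deleteEdges_adj.2 ⟨hxy, ?_⟩⟩
    rintro ⟨_, -, _, -, -, hcr⟩
    exact hdel hcr

/-- let `G` carry a type-2A, 1-planar, nice crossing structure and let `X`, `Y`
be disjoint vertex sets. Delete from `G` every edge `xy` with `x ∈ X`, `y ∈ Y` that
crosses an edge with both endpoints in `X`. Then every vertex of `Y` having a neighbour
in `X` in `G` still has a neighbour in `X` in the resulting graph. -/
theorem statement7 {V : Type*} [Fintype V] (G : SimpleGraph V)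
    (Cross : Sym2 V → Sym2 V → Prop)
    (hC : IsCrossingStructure G Cross) (h2A : IsType2A G Cross)
    (h1p : IsOnePlanar Cross) (hnice : IsNice G Cross)
    (X Y : Set V) (hXY : Disjoint X Y)
    (G' : SimpleGraph V)
    (hG' : G' = G.deleteEdges
      {e : Sym2 V | ∃ x ∈ X, ∃ y ∈ Y, e = s(x, y) ∧ ∃ a ∈ X, ∃ b ∈ X, Cross e s(a, b)}) :
    ∀ y ∈ Y, (∃ x ∈ X, G.Adj x y) → ∃ x ∈ X, G'.Adj x y :=
  statement7_general G Cross h2A hnice X Y G' hG'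
end
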